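/- Let L ∈ F_p((X^{-1})) with continued fraction partial quotients A_d satisfying K := sup_{d≥1} deg(A_d) < ∞, and let h ∈ F_p[X] be nonzero, B ∈ F_p[X] nonzero of degree e. Then for every q ∈ F_p[X], deg(h) + ν(hBL − q) ≥ −K − e, where ν is the degree valuation (ν(Σ_{i≥w} a_i X^{-i}) = −w for a_w ≠ 0). -/

import Mathlib

open scoped Classical ENNReal
open Polynomial

noncomputable section

namespace KH

/-- The field `F_p((X⁻¹))` of formal Laurent series in `X⁻¹` over `ZMod p`,
modeled as Hahn series over `ℤ`: the coefficient at `i : ℤ` is the coefficient of `X^{-i}`. -/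
abbrev LS (p : ℕ) := HahnSeries ℤ (ZMod p)

/-- The element `X` of `F_p((X⁻¹))` (exponent `-1` in `X⁻¹`). -/
def Xls (p : ℕ) : LS p := HahnSeries.single (-1 : ℤ) 1

/-- `ν(L) = -w` where `w` is the order of `L` (`ν(0) = 0` by convention). -/
def nu {p : ℕ} (L : LS p) : ℤ := -(HahnSeries.order L)

/-- Embedding of polynomials `F_p[X] → F_p((X⁻¹))`, sending `X` to `Xls`. -/
def P2L (p : ℕ) [Fact p.Prime] : Polynomial (ZMod p) →+* LS p :=
  (Polynomial.aeval (Xls p)).toRingHom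

/-- The fractional part `{L} = ∑_{i ≥ 1} a_i X^{-i}`. -/
def frac {p : ℕ} (L : LS p) : LS p where
  coeff i := if 1 ≤ i then L.coeff i else 0
  isPWO_support' := L.isPWO_support'.mono (by
    intro i hi
    by_cases h : (1:ℤ) ≤ i <;> simp [HahnSeries.support, h] at hi ⊢ <;> tauto)

/-- Continued fraction remainders: `cfRem L 0 = L`, `cfRem L (n+1) = 1/{cfRem L n}`. -/
def cfRem {p : ℕ} [Fact p.Prime] (L : LS p) : ℕ → LS p
  | 0 => L
  | n + 1 => (frac (cfRem L n))⁻¹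

/-- The `n`-th continued fraction partial quotient of `L` (as a Laurent series; it is the
polynomial part of the `n`-th remainder). -/
def cfA {p : ℕ} [Fact p.Prime] (L : LS p) (n : ℕ) : LS p :=
  cfRem L n - frac (cfRem L n)

/-- The degree of the `n`-th partial quotient. -/
def degA {p : ℕ} [Fact p.Prime] (L : LS p) (n : ℕ) : ℤ := nu (cfA L n)

/-- Denominators `Q_h` of the convergents of `L`. -/
def cfQ {p : ℕ} [Fact p.Prime] (L : LS p) : ℕ → LS p
  | 0 => 1
  | 1 => cfA L 1
  | n + 2 => cfA L (n + 2) * cfQ L (n + 1) + cfQ L n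

/-- Numerators `P_h` of the convergents of `L`. -/
def cfP {p : ℕ} [Fact p.Prime] (L : LS p) : ℕ → LS p
  | 0 => cfA L 0
  | 1 => cfA L 1 * cfA L 0 + 1
  | n + 2 => cfA L (n + 2) * cfP L (n + 1) + cfP L n

/-- `d_h = deg Q_h`. -/
def dQ {p : ℕ} [Fact p.Prime] (L : LS p) (h : ℕ) : ℤ := nu (cfQ L h)

/-- Evaluation at `X = p` of (the fractional part of) a Laurent series:
`∑_{i ≥ 1} a_i p^{-i}` with digits `a_i ∈ {0, …, p-1}`. -/
def evalAtP {p : ℕ} (L : LS p) : ℝ :=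
  ∑' i : ℕ, ((L.coeff ((i : ℤ) + 1)).val : ℝ) / (p : ℝ) ^ (i + 1)

/-- The polynomial over `F_p` associated with `n ∈ ℕ`, whose coefficients are the
base-`p` digits of `n`. -/
def nPoly (p : ℕ) (n : ℕ) : Polynomial (ZMod p) :=
  ∑ i ∈ Finset.range (n + 1), Polynomial.C ((n / p ^ i % p : ℕ) : ZMod p) * Polynomial.X ^ i

/-- The `n`-th point of the digital Kronecker sequence associated with `L`. -/
def kron (p : ℕ) [Fact p.Prime] (L : LS p) (n : ℕ) : ℝ :=
  evalAtP (frac (P2L p (nPoly p n) * L))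

/-- The `i`-th digit of `n(X)` in base `b(X)`. -/
def haltonDigit (p : ℕ) [Fact p.Prime] (b : Polynomial (ZMod p)) (n i : ℕ) :
    Polynomial (ZMod p) :=
  (nPoly p n /ₘ b ^ i) %ₘ b

/-- Evaluation of a polynomial over `F_p` at `p` (digits in `{0,…,p-1}`). -/
def polyEvalNat (p : ℕ) (a : Polynomial (ZMod p)) : ℕ :=
  ∑ i ∈ Finset.range (a.natDegree + 1), (a.coeff i).val * p ^ i

/-- The `n`-th point of the van der Corput sequence in base `b(X)` over `F_p`. -/
def vdc (p : ℕ) [Fact p.Prime] (b : Polynomial (ZMod p)) (n : ℕ) : ℝ :=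
  ∑' i : ℕ, (polyEvalNat p (haltonDigit p b n i) : ℝ) / (p : ℝ) ^ (b.natDegree * (i + 1))

/-- Number of indices `n < N` with `z n` in the box `∏ [a i, b i)`. -/
def countIn (d : ℕ) (z : ℕ → Fin d → ℝ) (N : ℕ) (a b : Fin d → ℝ) : ℕ :=
  ((Finset.range N).filter fun n => ∀ i, a i ≤ z n i ∧ z n i < b i).card

/-- The (extreme) discrepancy of the first `N` points of `z` in `[0,1)^d`. -/
def disc (d : ℕ) (z : ℕ → Fin d → ℝ) (N : ℕ) : ℝ :=
  sSup { r | ∃ a b : Fin d → ℝ, (∀ i, 0 ≤ a i ∧ a i ≤ b i ∧ b i ≤ 1) ∧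
    r = |(countIn d z N a b : ℝ) / N - ∏ i, (b i - a i)| }

/-- The star discrepancy of the first `N` points of `z` in `[0,1)^d`. -/
def starDisc (d : ℕ) (z : ℕ → Fin d → ℝ) (N : ℕ) : ℝ :=
  sSup { r | ∃ b : Fin d → ℝ, (∀ i, 0 < b i ∧ b i ≤ 1) ∧
    r = |(countIn d z N (fun _ => 0) b : ℝ) / N - ∏ i, b i| }

/-- The Laurent series `∑_{i ≥ 1} a_{i-1} X^{-i}` associated with a coefficient
sequence `a : ℕ → ZMod p`; this identifies `H = {L : ν(L) < 0}` with `ℕ → ZMod p`. -/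
def toLS (p : ℕ) (a : ℕ → ZMod p) : LS p where
  coeff i := if h : 1 ≤ i then a (i - 1).toNat else 0
  isPWO_support' := by
    have : BddBelow {i : ℤ | (if h : 1 ≤ i then a (i - 1).toNat else 0) ≠ 0} := by
      refine ⟨1, fun i hi => ?_⟩
      by_cases h : (1:ℤ) ≤ i
      · exact h
      · simp [h] at hi
    exact (Set.isPWO_iff_isWF.mpr this.wellFoundedOn_lt)

instance : MeasurableSpace (ZMod p) := ⊤

/-- A `(t, m, s)`-net in base `p`. -/
def IsNet (p t m s : ℕ) (P : Fin (p ^ m) → Fin s → ℝ) : Prop :=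
  t ≤ m ∧ ∀ (d a : Fin s → ℕ), (∑ i, d i) = m - t → (∀ i, a i < p ^ d i) →
    (Finset.univ.filter fun n => ∀ i,
      (a i : ℝ) / (p : ℝ) ^ d i ≤ P n i ∧ P n i < ((a i : ℝ) + 1) / (p : ℝ) ^ d i).card = p ^ t

/-- A `(t, s)`-sequence in base `p`. -/
def IsTSeq (p t s : ℕ) (z : ℕ → Fin s → ℝ) : Prop :=
  ∀ m k : ℕ, t < m → IsNet p t m s fun n => z (k * p ^ m + (n : ℕ))


/-!
Let `D_k = deg Q_k`. As every partial quotient `A_d` (`d ≥ 1`) is nonconstant, `D_k` increases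
strictly from `D_0 = 0`, so `m = deg (hB)` satisfies `D_k ≤ m < D_{k+1}` for some `k`. The matrix of
the consecutive convergents `(Q_k, P_k)`, `(Q_{k+1}, P_{k+1})` has determinant `±1`, hence
`hB = a Q_k + b Q_{k+1}` and `q = a P_k + b P_{k+1}` with polynomials `a, b`, and
`hBL - q = a E_k + b E_{k+1}`, where `E_k = Q_k L - P_k` has `ν(E_k) = -D_{k+1}` because
`r_{k+2} E_{k+1} = -E_k` for the complete quotients `r`. If `b = 0`, then
`ν(hBL - q) = m - D_k - D_{k+1} ≥ -m - deg A_{k+1}`. Otherwise `ν(b Q_{k+1}) > m`, so `a Q_k` has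
to cancel the leading term of `b Q_{k+1}`; this forces `ν(hBL - q) = ν(b) - D_k ≥ -m`.
-/

section Valuation

variable {p : ℕ} {x y : LS p}

lemma nu_zero : nu (0 : LS p) = 0 := by
  simp [nu]

lemma ne_zero_of_nu_ne_zero (h : nu x ≠ 0) : x ≠ 0 := by
  rintro rfl
  exact h nu_zero

lemma nu_one : nu (1 : LS p) = 0 := by
  simp [nu]

lemma nu_neg (x : LS p) : nu (-x) = nu x := by
  simp [nu, HahnSeries.order_neg]

lemma nu_mul [Fact p.Prime] (hx : x ≠ 0) (hy : y ≠ 0) : nu (x * y) = nu x + nu y := by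
  simp only [nu, HahnSeries.order_mul hx hy]
  ring

lemma nu_eq_sub_of_mul_eq [Fact p.Prime] {r e c : LS p} (hr : r ≠ 0) (hc : c ≠ 0) (h : r * e = c) :
    nu e = nu c - nu r := by
  rw [← h, nu_mul hr (right_ne_zero_of_mul (h ▸ hc))]
  ring

lemma nu_add_eq_left (hx : x ≠ 0) (h : nu y < nu x) : nu (x + y) = nu x := by
  rcases eq_or_ne y 0 with rfl | hy
  · rw [add_zero]
  have htop : x.orderTop < y.orderTop := by
    rw [← HahnSeries.order_eq_orderTop_of_ne_zero hx, ← HahnSeries.order_eq_orderTop_of_ne_zero hy]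
    exact_mod_cast neg_lt_neg_iff.1 h
  have hsum := HahnSeries.orderTop_add_eq_left htop
  have hxy : x + y ≠ 0 := HahnSeries.orderTop_ne_top.1 (hsum ▸ HahnSeries.orderTop_ne_top.2 hx)
  rw [← HahnSeries.order_eq_orderTop_of_ne_zero hxy, ← HahnSeries.order_eq_orderTop_of_ne_zero hx]
    at hsum
  simp only [nu, WithTop.coe_inj.1 hsum]

lemma nu_frac_nonpos (x : LS p) : nu (frac x) ≤ 0 := by
  rcases eq_or_ne (frac x) 0 with h | h
  · rw [h, nu_zero]
  have hcoeff : (frac x).coeff (frac x).order ≠ 0 := mt HahnSeries.coeff_order_eq_zero.1 h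
  have : 1 ≤ (frac x).order := by
    by_contra hlt
    exact hcoeff (if_neg hlt)
  simp only [nu]
  omega

end Valuation

-- The polynomials in `X`, as the coefficient at `i` is that of `X^{-i}`.
def polySubring (R : Type*) [Ring R] : Subring (HahnSeries ℤ R) where
  carrier := {x | ∀ i, 0 < i → x.coeff i = 0}
  mul_mem' {x y} hx hy i hi := by
    rw [HahnSeries.coeff_mul]
    refine Finset.sum_eq_zero fun jk hjk => ?_
    rw [Finset.mem_antidiagonal] at hjk
    rcases lt_or_ge 0 jk.1 with hj | hj
    · rw [hx _ hj, zero_mul]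
    · rw [hy _ (by omega), mul_zero]
  one_mem' i hi := by rw [HahnSeries.coeff_one, if_neg hi.ne']
  add_mem' {x y} hx hy i hi := by rw [HahnSeries.coeff_add, hx i hi, hy i hi, add_zero]
  zero_mem' _ _ := rfl
  neg_mem' {x} hx i hi := by rw [HahnSeries.coeff_neg, hx i hi, neg_zero]

lemma nu_nonneg_of_mem {p : ℕ} {x : LS p} (hx : x ∈ polySubring (ZMod p)) : 0 ≤ nu x := by
  rcases eq_or_ne x 0 with rfl | h
  · rw [nu_zero]
  have hcoeff : x.coeff x.order ≠ 0 := mt HahnSeries.coeff_order_eq_zero.1 h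
  have : x.order ≤ 0 := by
    by_contra hpos
    exact hcoeff (hx _ (by omega))
  simp only [nu]
  omega

section Polynomial

variable {p : ℕ} [Fact p.Prime]

lemma P2L_C_mul_X_pow (r : ZMod p) (n : ℕ) :
    P2L p (C r * X ^ n) = HahnSeries.single (-(n : ℤ)) r := by
  simp [P2L, Xls, HahnSeries.single_pow, HahnSeries.algebraMap_apply', HahnSeries.C_apply]

lemma P2L_mem (f : Polynomial (ZMod p)) : P2L p f ∈ polySubring (ZMod p) := by
  induction f using Polynomial.induction_on' with
  | add f g hf hg => rw [map_add]; exact add_mem hf hg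
  | monomial n r =>
    rw [← C_mul_X_pow_eq_monomial, P2L_C_mul_X_pow]
    intro i hi
    rw [HahnSeries.coeff_single, if_neg (by omega)]

lemma nu_P2L (f : Polynomial (ZMod p)) : nu (P2L p f) = f.natDegree := by
  induction f using Polynomial.induction_with_natDegree_le (N := f.natDegree) with
  | zero => simp [nu_zero]
  | C_mul_pow n r hr _ =>
    rw [P2L_C_mul_X_pow, natDegree_C_mul_X_pow n r hr]
    simp [nu, HahnSeries.order_single hr]
  | add f g hfg _ ihf ihg =>
    have hg : P2L p g ≠ 0 := ne_zero_of_nu_ne_zero (by rw [ihg]; omega)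
    rw [natDegree_add_eq_right_of_natDegree_lt hfg, add_comm, map_add,
      nu_add_eq_left hg (by rw [ihf, ihg]; exact_mod_cast hfg), ihg]
  | df => exact le_rfl

end Polynomial

lemma exists_le_lt_succ_of_strictMono {f : ℕ → ℤ} (hf : StrictMono f) {m : ℤ} (h0 : f 0 ≤ m) :
    ∃ k, f k ≤ m ∧ m < f (k + 1) := by
  have hgrowth : ∀ n : ℕ, f 0 + n ≤ f n := by
    intro n
    induction n with
    | zero => simp
    | succ n ih => push_cast; linarith [hf n.lt_succ_self]
  have hex : ∃ n, m < f n :=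
    ⟨(m - f 0).toNat + 1, by have := hgrowth ((m - f 0).toNat + 1); push_cast at this; omega⟩
  obtain ⟨k, hk⟩ : ∃ k, Nat.find hex = k + 1 :=
    Nat.exists_eq_add_one.2 (Nat.pos_of_ne_zero fun h => by
      have := Nat.find_spec hex
      rw [h] at this
      omega)
  exact ⟨k, not_lt.1 (Nat.find_min hex (by omega)), hk ▸ Nat.find_spec hex⟩

lemma exists_mem_combination_of_det {R : Type*} [CommRing R] (S : Subring R)
    {Q Q' P P' ε G q : R} (hdet : Q' * P - P' * Q = ε) (hε : ε * ε = 1)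
    (hQ : Q ∈ S) (hQ' : Q' ∈ S) (hP : P ∈ S) (hP' : P' ∈ S) (hεS : ε ∈ S)
    (hG : G ∈ S) (hq : q ∈ S) :
    ∃ a ∈ S, ∃ b ∈ S, G = a * Q + b * Q' ∧ q = a * P + b * P' :=
  ⟨ε * (q * Q' - G * P'), S.mul_mem hεS (S.sub_mem (S.mul_mem hq hQ') (S.mul_mem hG hP')),
    ε * (G * P - q * Q), S.mul_mem hεS (S.sub_mem (S.mul_mem hG hP) (S.mul_mem hq hQ)),
    by linear_combination (-(ε * G)) * hdet - G * hε,
    by linear_combination (-(ε * q)) * hdet - q * hε⟩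

section ContinuedFraction

variable {p : ℕ} [Fact p.Prime] {L : LS p}

def cfErr (L : LS p) (n : ℕ) : LS p := cfQ L n * L - cfP L n

lemma cfRem_eq_cfA_add_inv (L : LS p) (n : ℕ) : cfRem L n = cfA L n + (cfRem L (n + 1))⁻¹ := by
  rw [cfRem, inv_inv, cfA, sub_add_cancel]

lemma nu_cfRem {n : ℕ} (h : 1 ≤ degA L n) : nu (cfRem L n) = degA L n := by
  have hA : cfA L n ≠ 0 := ne_zero_of_nu_ne_zero (by rw [← degA]; omega)
  rw [← sub_add_cancel (cfRem L n) (frac (cfRem L n)), ← cfA,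
    nu_add_eq_left hA (by rw [← degA]; linarith [nu_frac_nonpos (cfRem L n)]), degA]

lemma cfRem_succ_ne_zero (hinf : ∀ d : ℕ, 1 ≤ d → 1 ≤ degA L d) (n : ℕ) :
    cfRem L (n + 1) ≠ 0 :=
  ne_zero_of_nu_ne_zero (by rw [nu_cfRem (hinf _ n.succ_pos)]; linarith [hinf _ n.succ_pos])

lemma cfA_mem (L : LS p) (n : ℕ) : cfA L n ∈ polySubring (ZMod p) := by
  intro i hi
  rw [cfA, HahnSeries.coeff_sub]
  exact sub_eq_zero.2 (if_pos hi).symm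

lemma cfQ_mem_and_cfP_mem (L : LS p) :
    ∀ n, cfQ L n ∈ polySubring (ZMod p) ∧ cfP L n ∈ polySubring (ZMod p)
  | 0 => ⟨one_mem _, cfA_mem L 0⟩
  | 1 => ⟨cfA_mem L 1, add_mem (mul_mem (cfA_mem L 1) (cfA_mem L 0)) (one_mem _)⟩
  | n + 2 =>
    ⟨add_mem (mul_mem (cfA_mem L _) (cfQ_mem_and_cfP_mem L (n + 1)).1) (cfQ_mem_and_cfP_mem L n).1,
      add_mem (mul_mem (cfA_mem L _) (cfQ_mem_and_cfP_mem L (n + 1)).2) (cfQ_mem_and_cfP_mem L n).2⟩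

lemma dQ_zero (L : LS p) : dQ L 0 = 0 := nu_one

lemma dQ_nonneg (L : LS p) (n : ℕ) : 0 ≤ dQ L n := nu_nonneg_of_mem (cfQ_mem_and_cfP_mem L n).1

lemma dQ_succ (hinf : ∀ d : ℕ, 1 ≤ d → 1 ≤ degA L d) :
    ∀ n, dQ L (n + 1) = dQ L n + degA L (n + 1)
  | 0 => by simp [dQ, cfQ, degA, nu_one]
  | n + 1 => by
    have ih := dQ_succ hinf n
    have hdQ := dQ_nonneg L n
    have hA1 := hinf (n + 1) (by omega)
    have hA2 := hinf (n + 2) (by omega)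
    have hA : cfA L (n + 2) ≠ 0 := ne_zero_of_nu_ne_zero (by rw [← degA]; omega)
    have hQ : cfQ L (n + 1) ≠ 0 := ne_zero_of_nu_ne_zero (by rw [← dQ]; omega)
    have hAQ : nu (cfA L (n + 2) * cfQ L (n + 1)) = degA L (n + 2) + dQ L (n + 1) := nu_mul hA hQ
    show nu (cfA L (n + 2) * cfQ L (n + 1) + cfQ L n) = _
    rw [nu_add_eq_left (mul_ne_zero hA hQ) (by rw [hAQ, ← dQ]; omega), hAQ]
    ring

lemma dQ_strictMono (hinf : ∀ d : ℕ, 1 ≤ d → 1 ≤ degA L d) : StrictMono (dQ L) :=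
  strictMono_nat_of_lt_succ fun n => by
    rw [dQ_succ hinf]
    linarith [hinf (n + 1) n.succ_pos]

lemma dQ_succ_pos (hinf : ∀ d : ℕ, 1 ≤ d → 1 ≤ degA L d) (n : ℕ) : 0 < dQ L (n + 1) :=
  dQ_zero L ▸ dQ_strictMono hinf n.succ_pos

lemma cfQ_succ_mul_cfP_sub (L : LS p) :
    ∀ n, cfQ L (n + 1) * cfP L n - cfP L (n + 1) * cfQ L n = (-1) ^ (n + 1)
  | 0 => by simp [cfQ, cfP]
  | n + 1 => by
    show (cfA L (n + 2) * cfQ L (n + 1) + cfQ L n) * cfP L (n + 1)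
        - (cfA L (n + 2) * cfP L (n + 1) + cfP L n) * cfQ L (n + 1) = _
    linear_combination -cfQ_succ_mul_cfP_sub L n

lemma cfErr_zero (L : LS p) : cfErr L 0 = (cfRem L 1)⁻¹ := by
  rw [cfErr, cfQ, cfP, one_mul, sub_eq_iff_eq_add']
  exact cfRem_eq_cfA_add_inv L 0

lemma cfErr_add_two (L : LS p) (n : ℕ) :
    cfErr L (n + 2) = cfA L (n + 2) * cfErr L (n + 1) + cfErr L n := by
  simp only [cfErr, cfQ, cfP]
  ring

lemma cfRem_mul_cfErr (hinf : ∀ d : ℕ, 1 ≤ d → 1 ≤ degA L d) :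
    ∀ n, cfRem L (n + 2) * cfErr L (n + 1) = -cfErr L n
  | 0 => by
    have h0 : L = cfA L 0 + (cfRem L 1)⁻¹ := cfRem_eq_cfA_add_inv L 0
    have h1 : cfRem L 1 = cfA L 1 + (cfRem L 2)⁻¹ := cfRem_eq_cfA_add_inv L 1
    have hr1 : cfRem L 1 * (cfRem L 1)⁻¹ = 1 := mul_inv_cancel₀ (cfRem_succ_ne_zero hinf 0)
    have hr2 : cfRem L 2 * (cfRem L 2)⁻¹ = 1 := mul_inv_cancel₀ (cfRem_succ_ne_zero hinf 1)
    rw [cfErr_zero]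
    simp only [cfErr, cfQ, cfP]
    linear_combination cfRem L 2 * cfA L 1 * h0 - cfRem L 2 * (cfRem L 1)⁻¹ * h1
      + cfRem L 2 * hr1 - (cfRem L 1)⁻¹ * hr2
  | n + 1 => by
    have ih := cfRem_mul_cfErr hinf n
    have h1 := cfRem_eq_cfA_add_inv L (n + 2)
    have hr3 := mul_inv_cancel₀ (cfRem_succ_ne_zero hinf (n + 2))
    rw [cfErr_add_two]
    linear_combination cfRem L (n + 3) * ih - cfErr L (n + 1) * hr3
      - cfRem L (n + 3) * cfErr L (n + 1) * h1

lemma nu_cfErr (hinf : ∀ d : ℕ, 1 ≤ d → 1 ≤ degA L d) :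
    ∀ n, nu (cfErr L n) = -dQ L (n + 1)
  | 0 => by
    rw [nu_eq_sub_of_mul_eq (cfRem_succ_ne_zero hinf 0) one_ne_zero
      (by rw [cfErr_zero, mul_inv_cancel₀ (cfRem_succ_ne_zero hinf 0)]), nu_one,
      nu_cfRem (hinf 1 le_rfl), dQ_succ hinf, dQ_zero]
    ring
  | n + 1 => by
    have ih := nu_cfErr hinf n
    have hE : -cfErr L n ≠ 0 :=
      neg_ne_zero.2 (ne_zero_of_nu_ne_zero (by rw [ih]; linarith [dQ_succ_pos hinf n]))
    rw [nu_eq_sub_of_mul_eq (cfRem_succ_ne_zero hinf (n + 1)) hE (cfRem_mul_cfErr hinf n), nu_neg,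
      ih, nu_cfRem (hinf _ (by omega)), dQ_succ hinf (n + 1)]
    ring

lemma cfQ_ne_zero (hinf : ∀ d : ℕ, 1 ≤ d → 1 ≤ degA L d) : ∀ n, cfQ L n ≠ 0
  | 0 => one_ne_zero
  | n + 1 => ne_zero_of_nu_ne_zero (dQ_succ_pos hinf n).ne'

lemma cfErr_ne_zero (hinf : ∀ d : ℕ, 1 ≤ d → 1 ≤ degA L d) (n : ℕ) : cfErr L n ≠ 0 :=
  ne_zero_of_nu_ne_zero (by rw [nu_cfErr hinf]; linarith [dQ_succ_pos hinf n])

lemma neg_sub_degA_le_nu_add_mul_cfErr (hinf : ∀ d : ℕ, 1 ≤ d → 1 ≤ degA L d)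
    {G a b : LS p} (hb : b ∈ polySubring (ZMod p)) {k : ℕ}
    (hGab : G = a * cfQ L k + b * cfQ L (k + 1)) (hk : dQ L k ≤ nu G) (hk1 : nu G < dQ L (k + 1)) :
    -nu G - degA L (k + 1) ≤ nu (a * cfErr L k + b * cfErr L (k + 1)) := by
  have hEk := cfErr_ne_zero hinf k
  have hdQk := dQ_succ hinf k
  have hA := hinf (k + 1) k.succ_pos
  rcases eq_or_ne b 0 with rfl | hb0
  · rcases eq_or_ne a 0 with rfl | ha0
    · simp only [zero_mul, add_zero] at hGab ⊢
      subst hGab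
      rw [nu_zero]
      omega
    have hnuG : nu G = nu a + dQ L k := by
      rw [hGab, zero_mul, add_zero, nu_mul ha0 (cfQ_ne_zero hinf k), dQ]
    rw [zero_mul, add_zero, nu_mul ha0 hEk, nu_cfErr hinf k]
    omega
  have hbQ0 : b * cfQ L (k + 1) ≠ 0 := mul_ne_zero hb0 (cfQ_ne_zero hinf _)
  have hbQ : nu G < nu (b * cfQ L (k + 1)) := by
    rw [nu_mul hb0 (cfQ_ne_zero hinf _), ← dQ]
    linarith [nu_nonneg_of_mem hb]
  -- `nu (b Q_{k+1}) > nu G`, so the leading term of `b Q_{k+1}` must cancel against `a Q_k`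
  have haQ : nu (a * cfQ L k) = nu (b * cfQ L (k + 1)) := by
    rw [show a * cfQ L k = -(b * cfQ L (k + 1)) + G by rw [hGab]; ring,
      nu_add_eq_left (neg_ne_zero.2 hbQ0) (by rwa [nu_neg]), nu_neg]
  have ha0 : a ≠ 0 := left_ne_zero_of_mul (ne_zero_of_nu_ne_zero (by
    rw [haQ]; linarith [dQ_nonneg L k]))
  rw [nu_mul ha0 (cfQ_ne_zero hinf _), nu_mul hb0 (cfQ_ne_zero hinf _), ← dQ, ← dQ] at haQ
  have hlt : nu (b * cfErr L (k + 1)) < nu (a * cfErr L k) := by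
    rw [nu_mul ha0 hEk, nu_mul hb0 (cfErr_ne_zero hinf _), nu_cfErr hinf, nu_cfErr hinf,
      dQ_succ hinf (k + 1)]
    linarith [hinf (k + 2) (by omega)]
  rw [nu_add_eq_left (mul_ne_zero ha0 hEk) hlt, nu_mul ha0 hEk, nu_cfErr hinf]
  linarith [nu_nonneg_of_mem hb]

lemma neg_sub_degA_le_nu_mul_sub (hinf : ∀ d : ℕ, 1 ≤ d → 1 ≤ degA L d) {G q : LS p}
    (hG : G ∈ polySubring (ZMod p)) (hq : q ∈ polySubring (ZMod p)) {k : ℕ}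
    (hk : dQ L k ≤ nu G) (hk1 : nu G < dQ L (k + 1)) :
    -nu G - degA L (k + 1) ≤ nu (G * L - q) := by
  have hQP := cfQ_mem_and_cfP_mem L
  obtain ⟨a, -, b, hb, hGab, hqab⟩ := exists_mem_combination_of_det (polySubring (ZMod p))
    (cfQ_succ_mul_cfP_sub L k) (by rw [← mul_pow]; simp)
    (hQP k).1 (hQP (k + 1)).1 (hQP k).2 (hQP (k + 1)).2 (pow_mem (neg_mem (one_mem _)) _) hG hq
  have hsplit : G * L - q = a * cfErr L k + b * cfErr L (k + 1) := by
    rw [hGab, hqab, cfErr, cfErr]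
    ring
  rw [hsplit]
  exact neg_sub_degA_le_nu_add_mul_cfErr hinf hb hGab hk hk1

end ContinuedFraction

theorem statement19_general (p : ℕ) [Fact p.Prime] (L : LS p)
    (hinf : ∀ d : ℕ, 1 ≤ d → 1 ≤ degA L d)
    (KL : ℕ) (hK : ∀ d : ℕ, 1 ≤ d → degA L d ≤ (KL : ℤ))
    (h B : Polynomial (ZMod p))
    (q : Polynomial (ZMod p)) :
    -(KL : ℤ) - (B.natDegree : ℤ) ≤
      (h.natDegree : ℤ) + nu (P2L p h * P2L p B * L - P2L p q) := by
  rw [← map_mul]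
  obtain ⟨k, hk, hk1⟩ := exists_le_lt_succ_of_strictMono (dQ_strictMono hinf)
    (show dQ L 0 ≤ nu (P2L p (h * B)) by rw [dQ_zero, nu_P2L]; positivity)
  have hkey := neg_sub_degA_le_nu_mul_sub hinf (P2L_mem (h * B)) (P2L_mem q) hk hk1
  rw [nu_P2L] at hkey
  have hdeg : ((h * B).natDegree : ℤ) ≤ h.natDegree + B.natDegree := by
    exact_mod_cast natDegree_mul_le
  linarith [hK (k + 1) k.succ_pos]

/-- If `L` has continued fraction partial quotients of degree bounded by
`K`, `h ≠ 0`, and `B ≠ 0` of degree `e`, then for every polynomial `q`,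
`deg(h) + ν(hBL − q) ≥ −K − e`. -/
theorem statement19 (p : ℕ) [Fact p.Prime] (L : LS p)
    (hinf : ∀ d : ℕ, 1 ≤ d → 1 ≤ degA L d)
    (KL : ℕ) (hK : ∀ d : ℕ, 1 ≤ d → degA L d ≤ (KL : ℤ))
    (h B : Polynomial (ZMod p)) (hh : h ≠ 0) (hB : B ≠ 0)
    (q : Polynomial (ZMod p)) :
    -(KL : ℤ) - (B.natDegree : ℤ) ≤
      (h.natDegree : ℤ) + nu (P2L p h * P2L p B * L - P2L p q) :=
  statement19_general p L hinf KL hK h B q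

end KH
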